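/- arXiv:2106.09252 — 8 statements merged into one kernel-verified Lean document; each statement's English description precedes it below -/
import Mathlib

section
/- Let g = y − (c²/(4‖y − z₀‖))(y − z₀) and T^v = (4‖y − z₀‖ − c²)/(4s). If 4‖y − z₀‖ > c², then for every time t ∈ [0, T^v] the point g lies in the tracking cone, g ∈ C(t), and no burn-through occurs for a decoy positioned at g at time t, i.e. ‖y − z(t)‖ ≥ c·√(‖g − z(t)‖). -/
/-- The target jamming location `g = y − (c²/(4‖y − z₀‖))(y − z₀)`
lies in the tracking cone and satisfies the no-burn-through condition for all
times `t ∈ [0, Tᵛ]`, where `Tᵛ = (4‖y − z₀‖ − c²)/(4s)`. -/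
theorem stmt_0
    (y z₀ : EuclideanSpace ℝ (Fin 3)) (hz₀ : z₀ ≠ y)
    (s : ℝ) (hs : 0 < s)
    (θ : ℝ) (hθ : θ ∈ Set.Ioo 0 (Real.pi / 4))
    (c : ℝ) (hc : 0 < c)
    (z : ℝ → EuclideanSpace ℝ (Fin 3))
    (hz : ∀ t : ℝ, z t = z₀ + ((s * t) / ‖y - z₀‖) • (y - z₀))
    (zdot : EuclideanSpace ℝ (Fin 3))
    (hzdot : zdot = (s / ‖y - z₀‖) • (y - z₀))
    (g : EuclideanSpace ℝ (Fin 3))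
    (hg : g = y - (c ^ 2 / (4 * ‖y - z₀‖)) • (y - z₀))
    (Tv : ℝ) (hTv : Tv = (4 * ‖y - z₀‖ - c ^ 2) / (4 * s))
    (hviable : 4 * ‖y - z₀‖ > c ^ 2) :
    ∀ t ∈ Set.Icc (0 : ℝ) Tv,
      (‖g - z t‖ * s * Real.cos θ ≤ (inner ℝ (g - z t) zdot : ℝ) ∧
        ‖g - z t‖ ≤ ‖y - z t‖) ∧
      ‖y - z t‖ ≥ c * Real.sqrt ‖g - z t‖ := by
  intro t ht
  obtain ⟨ht0, htT⟩ := ht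
  have hd : 0 < ‖y - z₀‖ := by
    rw [norm_sub_pos_iff]
    exact fun h => hz₀ h.symm
  set d := ‖y - z₀‖ with hdd
  have hst : 4 * (s * t) ≤ 4 * d - c ^ 2 := by
    rw [hTv, le_div_iff₀ (by linarith : (0:ℝ) < 4 * s)] at htT
    nlinarith
  have hst0 : 0 ≤ s * t := mul_nonneg hs.le ht0
  set A : ℝ := 4 * d - c ^ 2 - 4 * (s * t) with hA_def
  have hA : 0 ≤ A := by simp only [hA_def]; linarith
  have hgz : g - z t = ((A / (4 * d))) • (y - z₀) := by
    rw [hg, hz, hA_def]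
    have h1 : (4 * d - c ^ 2 - 4 * (s * t)) / (4 * d)
        = 1 - c ^ 2 / (4 * d) - s * t / d := by field_simp
    rw [h1]
    module
  have hyz : y - z t = (((d - s * t) / d)) • (y - z₀) := by
    rw [hz]
    have h1 : (d - s * t) / d = 1 - s * t / d := by field_simp
    rw [h1]
    module
  have hng : ‖g - z t‖ = A / 4 := by
    rw [hgz, norm_smul, Real.norm_eq_abs,
      abs_of_nonneg (div_nonneg hA (by linarith))]
    rw [← hdd]
    field_simp
  have hdst : 0 ≤ d - s * t := by nlinarith
  have hny : ‖y - z t‖ = d - s * t := by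
    rw [hyz, norm_smul, Real.norm_eq_abs,
      abs_of_nonneg (div_nonneg hdst hd.le)]
    field_simp
    rw [← hdd]; ring
  have hin : (inner ℝ (g - z t) zdot : ℝ) = (A / 4) * s := by
    rw [hgz, hzdot, real_inner_smul_left, real_inner_smul_right,
      real_inner_self_eq_norm_sq, ← hdd]
    field_simp
  refine ⟨⟨?_, ?_⟩, ?_⟩
  · rw [hng, hin]
    have hcos := Real.cos_le_one θ
    have h1 : 0 ≤ (A / 4 * s) * (1 - Real.cos θ) :=
      mul_nonneg (mul_nonneg (div_nonneg hA (by norm_num)) hs.le)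
        (sub_nonneg.mpr hcos)
    nlinarith [h1]
  · rw [hng, hny]
    have := pow_pos hc 2
    linarith
  · rw [hng, hny, ge_iff_le]
    have key : c ^ 2 * (A / 4) ≤ (d - s * t) ^ 2 := by
      nlinarith [sq_nonneg (d - s * t - c ^ 2 / 2)]
    calc c * Real.sqrt (A / 4) = Real.sqrt (c ^ 2 * (A / 4)) := by
          rw [Real.sqrt_mul (sq_nonneg c), Real.sqrt_sq hc.le]
      _ ≤ Real.sqrt ((d - s * t) ^ 2) := Real.sqrt_le_sqrt key
      _ = d - s * t := Real.sqrt_sq hdst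
end

section
/- For every line parameter υ ∈ [0, 1], the static point g_υ = υ·z₀ + (1 − υ)·y on the segment from the asset to the initial threat position lies in the tracking cone for the duration T^c(υ) = (1 − υ)‖y − z₀‖/s, i.e. g_υ ∈ C(t) for all t ∈ [0, (1 − υ)‖y − z₀‖/s]. -/
/-- For every line parameter `υ ∈ [0, 1]`, the static point
`g_υ = υ z₀ + (1 − υ) y` lies in the tracking cone for all times
`t ∈ [0, (1 − υ)‖y − z₀‖/s]`. -/
theorem stmt_3
    (y z₀ : EuclideanSpace ℝ (Fin 3)) (hz₀ : z₀ ≠ y)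
    (s : ℝ) (hs : 0 < s)
    (θ : ℝ) (hθ : θ ∈ Set.Ioo 0 (Real.pi / 4))
    (z : ℝ → EuclideanSpace ℝ (Fin 3))
    (hz : ∀ t : ℝ, z t = z₀ + ((s * t) / ‖y - z₀‖) • (y - z₀))
    (zdot : EuclideanSpace ℝ (Fin 3))
    (hzdot : zdot = (s / ‖y - z₀‖) • (y - z₀))
    (υ : ℝ) (hυ : υ ∈ Set.Icc (0 : ℝ) 1)
    (gυ : EuclideanSpace ℝ (Fin 3))
    (hgυ : gυ = υ • z₀ + (1 - υ) • y) :
    ∀ t ∈ Set.Icc (0 : ℝ) ((1 - υ) * ‖y - z₀‖ / s),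
      ‖gυ - z t‖ * s * Real.cos θ ≤ (inner ℝ (gυ - z t) zdot : ℝ) ∧
      ‖gυ - z t‖ ≤ ‖y - z t‖ := by
  intro t ht
  obtain ⟨ht0, ht1⟩ := ht
  obtain ⟨hυ0, hυ1⟩ := hυ
  have hyz : y - z₀ ≠ 0 := sub_ne_zero.mpr (Ne.symm hz₀)
  set R : ℝ := ‖y - z₀‖ with hRdef
  have hR : 0 < R := norm_pos_iff.mpr hyz
  set α : ℝ := 1 - υ - s * t / R with hαdef
  have hst : s * t / R ≤ 1 - υ := by
    rw [div_le_iff₀ hR]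
    calc s * t ≤ s * ((1 - υ) * R / s) := by
          exact mul_le_mul_of_nonneg_left ht1 hs.le
      _ = (1 - υ) * R := by field_simp
  have hα0 : 0 ≤ α := by simp [hαdef]; linarith
  have hst0 : 0 ≤ s * t / R := by positivity
  have hg : gυ - z t = α • (y - z₀) := by
    rw [hgυ, hz, hαdef]
    module
  have hyzt : y - z t = (1 - s * t / R) • (y - z₀) := by
    rw [hz]
    module
  have hβ0 : 0 ≤ 1 - s * t / R := by linarith
  have hng : ‖gυ - z t‖ = α * R := by
    rw [hg, norm_smul, Real.norm_eq_abs, abs_of_nonneg hα0]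
  have hny : ‖y - z t‖ = (1 - s * t / R) * R := by
    rw [hyzt, norm_smul, Real.norm_eq_abs, abs_of_nonneg hβ0]
  have hinner : (inner ℝ (gυ - z t) zdot : ℝ) = α * s * R := by
    rw [hg, hzdot, real_inner_smul_left, real_inner_smul_right,
      real_inner_self_eq_norm_sq]
    field_simp
    ring
  have hcos : Real.cos θ ≤ 1 := Real.cos_le_one θ
  constructor
  · rw [hng, hinner]
    nlinarith [mul_nonneg hα0 hR.le, mul_nonneg (mul_nonneg hα0 hR.le) hs.le]
  · rw [hng, hny]
    nlinarith
end

section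
/- Let L = ‖y − z₀‖ and suppose 2L > c². For every line parameter υ with 0 ≤ υ < c²/(4L), the time t^b = (2L − c²)/(2s) satisfies t^b ∈ [0, (1 − υ)L/s], and burn-through occurs at time t^b for a decoy positioned at g_υ = υ·z₀ + (1 − υ)·y, i.e. ‖y − z(t^b)‖ < c·√(‖g_υ − z(t^b)‖). Consequently, no point on the segment with parameter υ < c²/(4L) satisfies the no-burn-through condition throughout [0, (1 − υ)L/s]. -/
/-- If `2L > c²` and `0 ≤ υ < c²/(4L)`, then
`t^b = (2L − c²)/(2s)` lies in `[0, (1 − υ)L/s]` and burn-through occurs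
at time `t^b` for a decoy positioned at `g_υ = υ z₀ + (1 − υ) y`; consequently
`g_υ` does not satisfy the no-burn-through condition throughout `[0, (1 − υ)L/s]`. -/
theorem stmt_6
    (y z₀ : EuclideanSpace ℝ (Fin 3)) (hz₀ : z₀ ≠ y)
    (s : ℝ) (hs : 0 < s)
    (c : ℝ) (hc : 0 < c)
    (z : ℝ → EuclideanSpace ℝ (Fin 3))
    (hz : ∀ t : ℝ, z t = z₀ + ((s * t) / ‖y - z₀‖) • (y - z₀))
    (L : ℝ) (hL : L = ‖y - z₀‖) (h2L : 2 * L > c ^ 2)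
    (υ : ℝ) (hυ0 : 0 ≤ υ) (hυb : υ < c ^ 2 / (4 * L))
    (gυ : EuclideanSpace ℝ (Fin 3))
    (hgυ : gυ = υ • z₀ + (1 - υ) • y)
    (tb : ℝ) (htb : tb = (2 * L - c ^ 2) / (2 * s)) :
    tb ∈ Set.Icc (0 : ℝ) ((1 - υ) * L / s) ∧
    ‖y - z tb‖ < c * Real.sqrt ‖gυ - z tb‖ ∧
    ¬ (∀ t ∈ Set.Icc (0 : ℝ) ((1 - υ) * L / s),
        ‖y - z t‖ ≥ c * Real.sqrt ‖gυ - z t‖) := by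

  have hL0 : 0 < L := by
    rw [hL]; exact norm_pos_iff.mpr (sub_ne_zero.mpr (Ne.symm hz₀))
  have hυL : υ * L < c ^ 2 / 4 := by
    calc υ * L < (c ^ 2 / (4 * L)) * L := by
          exact mul_lt_mul_of_pos_right hυb hL0
      _ = c ^ 2 / 4 := by field_simp
  have hst : s * tb / ‖y - z₀‖ = 1 - c ^ 2 / (2 * L) := by
    rw [htb, ← hL]; field_simp
  have hv : y - z tb = (c ^ 2 / (2 * L)) • (y - z₀) := by
    rw [hz, hst]; module
  have hw : gυ - z tb = (c ^ 2 / (2 * L) - υ) • (y - z₀) := by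
    rw [hz, hst, hgυ]; module
  have hc2L : (0:ℝ) ≤ c ^ 2 / (2 * L) := by positivity
  have hnv : ‖y - z tb‖ = c ^ 2 / 2 := by
    rw [hv, norm_smul, Real.norm_eq_abs, abs_of_nonneg hc2L, ← hL]
    field_simp
  have hpos : 0 < c ^ 2 / (2 * L) - υ := by
    have : υ < c ^ 2 / (2 * L) := by
      rw [lt_div_iff₀ (by linarith)]
      nlinarith
    linarith
  have hnw : ‖gυ - z tb‖ = c ^ 2 / 2 - υ * L := by
    rw [hw, norm_smul, Real.norm_eq_abs, abs_of_nonneg (le_of_lt hpos), ← hL]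
    field_simp
  have hbt : ‖y - z tb‖ < c * Real.sqrt ‖gυ - z tb‖ := by
    rw [hnv, hnw]
    have h1 : Real.sqrt (c ^ 2 / 4) < Real.sqrt (c ^ 2 / 2 - υ * L) := by
      apply Real.sqrt_lt_sqrt (by positivity); linarith
    have h2 : Real.sqrt (c ^ 2 / 4) = c / 2 := by
      rw [show c ^ 2 / 4 = (c / 2) ^ 2 by ring, Real.sqrt_sq (by positivity)]
    nlinarith
  have htmem : tb ∈ Set.Icc (0 : ℝ) ((1 - υ) * L / s) := by
    constructor
    · rw [htb]; apply div_nonneg (by linarith) (by linarith)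
    · rw [htb, div_le_div_iff₀ (by linarith) hs]
      nlinarith
  refine ⟨htmem, hbt, fun h => ?_⟩
  have := h tb htmem
  linarith
end

section
/- Let N ≥ 0 and let γ : {0, …, N} → {0, 1} be binary and γ□ : {0, …, N} → ℝ satisfy 0 ≤ γ□[l] ≤ 1 for all l, γ□[N] = γ[N], and for every l < N: γ□[l] ≤ γ[l], γ□[l] ≤ γ□[l+1], and γ□[l] ≥ γ[l] + γ□[l+1] − 1. Then γ□[l] ∈ {0, 1} for every l, and γ□[l] = 1 if and only if γ[l'] = 1 for every l' with l ≤ l' ≤ N. -/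
/-- Correctness of the mixed-integer encoding of the LTL
'always' operator over a finite horizon: the bounded continuous auxiliary
sequence `γbox` coupled to the binary sequence `γ` by the listed affine
recursive constraints is binary and indicates satisfaction of the proposition
at all remaining time steps. -/
theorem stmt_13
    (N : ℕ)
    (γ : ℕ → ℝ) (hγbin : ∀ l ≤ N, γ l = 0 ∨ γ l = 1)
    (γbox : ℕ → ℝ)
    (hbox01 : ∀ l ≤ N, 0 ≤ γbox l ∧ γbox l ≤ 1)
    (hboxN : γbox N = γ N)
    (h1 : ∀ l < N, γbox l ≤ γ l)
    (h2 : ∀ l < N, γbox l ≤ γbox (l + 1))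
    (h3 : ∀ l < N, γbox l ≥ γ l + γbox (l + 1) - 1) :
    ∀ l ≤ N, (γbox l = 0 ∨ γbox l = 1) ∧
      (γbox l = 1 ↔ ∀ l', l ≤ l' → l' ≤ N → γ l' = 1) := by
  have key : ∀ k l, l + k = N → (γbox l = 0 ∨ γbox l = 1) ∧
      (γbox l = 1 ↔ ∀ l', l ≤ l' → l' ≤ N → γ l' = 1) := by
    intro k
    induction k with
    | zero =>
      intro l hl
      simp only [Nat.add_zero] at hl
      subst hl
      refine ⟨hboxN ▸ hγbin l le_rfl, ?_⟩
      constructor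
      · intro h l' h1' h2'
        have : l' = l := le_antisymm h2' h1'
        rw [this, ← hboxN, h]
      · intro h
        rw [hboxN]; exact h l le_rfl le_rfl
    | succ k ih =>
      intro l hl
      have hlN : l < N := by omega
      have hl1 : l + 1 + k = N := by omega
      obtain ⟨ihbin, ihiff⟩ := ih (l + 1) hl1
      have hb01 := hbox01 l hlN.le
      rcases hγbin l hlN.le with hγ0 | hγ1
      · have hz : γbox l = 0 := le_antisymm (hγ0 ▸ h1 l hlN) hb01.1
        refine ⟨Or.inl hz, ?_⟩
        constructor
        · intro h; rw [hz] at h; norm_num at h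
        · intro h
          have := h l le_rfl hlN.le
          rw [this] at hγ0; norm_num at hγ0
      · have heq : γbox l = γbox (l + 1) := by
          have := h3 l hlN
          have := h2 l hlN
          rw [hγ1] at *
          linarith
        refine ⟨heq ▸ ihbin, ?_⟩
        rw [heq, ihiff]
        constructor
        · intro h l' h1' h2'
          rcases eq_or_lt_of_le h1' with rfl | hlt
          · exact hγ1
          · exact h l' hlt h2'
        · intro h l' h1' h2'
          exact h l' (by omega) h2'
  intro l hl
  exact key (N - l) l (by omega)
end

section
/- Let N ≥ 0 and let γ̄ : {0, …, N} → {0, 1} be binary and γ : {0, …, N} → ℝ satisfy 0 ≤ γ[l] ≤ 1 for all l, γ[N] = γ̄[N], and for every l < N: γ[l] ≥ γ̄[l], γ[l] ≥ γ[l+1], and γ[l] ≤ γ̄[l] + γ[l+1]. Then γ[l] ∈ {0, 1} for every l, and γ[l] = 1 if and only if there exists l' with l ≤ l' ≤ N and γ̄[l'] = 1. -/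
/-- Correctness of the mixed-integer encoding of the LTL
'eventually' operator over a finite horizon: the bounded continuous auxiliary
sequence `γ` coupled to the binary sequence `γbar` by the listed affine
recursive constraints is binary and indicates satisfaction of the formula at
some remaining time step. -/
theorem stmt_14
    (N : ℕ)
    (γbar : ℕ → ℝ) (hbin : ∀ l ≤ N, γbar l = 0 ∨ γbar l = 1)
    (γ : ℕ → ℝ)
    (hγ01 : ∀ l ≤ N, 0 ≤ γ l ∧ γ l ≤ 1)
    (hγN : γ N = γbar N)
    (h1 : ∀ l < N, γ l ≥ γbar l)
    (h2 : ∀ l < N, γ l ≥ γ (l + 1))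
    (h3 : ∀ l < N, γ l ≤ γbar l + γ (l + 1)) :
    ∀ l ≤ N, (γ l = 0 ∨ γ l = 1) ∧
      (γ l = 1 ↔ ∃ l', l ≤ l' ∧ l' ≤ N ∧ γbar l' = 1) := by
  have key : ∀ k l, l ≤ N → N - l = k →
      (γ l = 0 ∨ γ l = 1) ∧
      (γ l = 1 ↔ ∃ l', l ≤ l' ∧ l' ≤ N ∧ γbar l' = 1) := by
    intro k
    induction k with
    | zero =>
      intro l hl hk
      have hlN : l = N := by omega
      subst hlN
      refine ⟨hγN ▸ hbin l le_rfl, ?_, ?_⟩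
      · intro h
        exact ⟨l, le_rfl, le_rfl, by rw [← hγN]; exact h⟩
      · rintro ⟨l', hll, hl'N, hb⟩
        have : l' = l := le_antisymm hl'N hll
        subst this
        rw [hγN]; exact hb
    | succ k ih =>
      intro l hl hk
      have hlN : l < N := by omega
      have ih' := ih (l + 1) (by omega) (by omega)
      rcases hbin l (le_of_lt hlN) with hb | hb
      · have e : γ l = γ (l + 1) := by
          have h3' := h3 l hlN
          have h2' := h2 l hlN
          rw [hb] at h3'
          linarith
        refine ⟨e ▸ ih'.1, ?_, ?_⟩
        · intro h
          obtain ⟨l', ha, hb', hc⟩ := ih'.2.mp (by rw [← e]; exact h)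
          exact ⟨l', by omega, hb', hc⟩
        · rintro ⟨l', hll, hl'N, hb'⟩
          have hl1 : l + 1 ≤ l' := by
            rcases eq_or_lt_of_le hll with h | h
            · subst h; rw [hb] at hb'; norm_num at hb'
            · omega
          rw [e]
          exact ih'.2.mpr ⟨l', hl1, hl'N, hb'⟩
      · have hγl : γ l = 1 := by
          have := h1 l hlN
          have := (hγ01 l hl).2
          rw [hb] at *
          linarith
        exact ⟨Or.inr hγl, fun _ => ⟨l, le_rfl, le_of_lt hlN, hb⟩, fun _ => hγl⟩
  intro l hl
  exact key (N - l) l hl rfl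
end

section
/- Let N ≥ 0, let γ̄ : {0, …, N} → {0, 1} be binary, and let γ : {0, …, N} → ℝ satisfy 0 ≤ γ[l] ≤ 1 for all l, γ[N] = γ̄[N], and for every l < N: γ[l] ≥ γ̄[l], γ[l] ≥ γ[l+1], and γ[l] ≤ γ̄[l] + γ[l+1]. If γ[k] = 1 for some k ∈ {0, …, N}, then the set {l : k ≤ l ≤ N and γ̄[l] = 1} is nonempty and its minimum m satisfies m ≤ k − 1 + Σ_{l=k}^{N} γ[l]; that is, k − 1 + Σ_{l=k}^{N} γ[l] is an upper bound on the first time step at or after k at which γ̄ equals 1. -/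
/-- For the 'eventually' encoding, if `γ[k] = 1` then the set of
time steps `l ∈ {k, …, N}` with `γbar[l] = 1` is nonempty and its minimum `m`
satisfies `m ≤ k − 1 + Σ_{l=k}^{N} γ[l]`; i.e. the affine function
`k − 1 + Σ_{l=k}^{N} γ[l]` of the auxiliary variables upper-bounds the first
completion time step at or after `k`. -/
theorem stmt_15
    (N : ℕ)
    (γbar : ℕ → ℝ) (hbin : ∀ l ≤ N, γbar l = 0 ∨ γbar l = 1)
    (γ : ℕ → ℝ)
    (hγ01 : ∀ l ≤ N, 0 ≤ γ l ∧ γ l ≤ 1)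
    (hγN : γ N = γbar N)
    (h1 : ∀ l < N, γ l ≥ γbar l)
    (h2 : ∀ l < N, γ l ≥ γ (l + 1))
    (h3 : ∀ l < N, γ l ≤ γbar l + γ (l + 1))
    (k : ℕ) (hk : k ≤ N) (hγk : γ k = 1)
    (S : Set ℕ) (hS : S = {l : ℕ | k ≤ l ∧ l ≤ N ∧ γbar l = 1}) :
    S.Nonempty ∧
    ((sInf S : ℕ) : ℝ) ≤ (k : ℝ) - 1 + ∑ l ∈ Finset.Icc k N, γ l := by
  subst hS
  have hmono : ∀ l₁ l₂ : ℕ, l₁ ≤ l₂ → l₂ ≤ N → γ l₂ ≤ γ l₁ := by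
    intro l₁ l₂ hle hN
    induction l₂, hle using Nat.le_induction with
    | base => exact le_refl _
    | succ n hn ih => exact le_trans (h2 n (by omega)) (ih (by omega))
  have key : ∀ l, k ≤ l → l ≤ N → (∀ j, k ≤ j → j < l → γbar j = 0) → γ k ≤ γ l := by
    intro l hkl
    induction l, hkl using Nat.le_induction with
    | base => intro _ _; exact le_refl _
    | succ n hn ih =>
      intro hnN h0
      have hkn : γ k ≤ γ n := ih (by omega) (fun j hj hj' => h0 j hj (by omega))
      have := h3 n (by omega)
      have hz := h0 n hn (by omega)
      linarith
  have hne : {l : ℕ | k ≤ l ∧ l ≤ N ∧ γbar l = 1}.Nonempty := by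
    by_contra h
    have h0 : ∀ j, k ≤ j → j ≤ N → γbar j = 0 := by
      intro j hj hjN
      rcases hbin j hjN with h' | h'
      · exact h'
      · exact absurd ⟨j, hj, hjN, h'⟩ h
    have hzN : γbar N = 0 := h0 N hk le_rfl
    have := key N hk le_rfl (fun j hj hj' => h0 j hj (le_of_lt hj'))
    rw [hγk, hγN, hzN] at this
    linarith
  refine ⟨hne, ?_⟩
  obtain ⟨hkm, hmN, hγbarm⟩ := Nat.sInf_mem hne
  set m := sInf {l : ℕ | k ≤ l ∧ l ≤ N ∧ γbar l = 1} with hm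
  have h0 : ∀ j, k ≤ j → j < m → γbar j = 0 := by
    intro j hj hjm
    rcases hbin j (by omega) with h' | h'
    · exact h'
    · have : m ≤ j := Nat.sInf_le ⟨hj, by omega, h'⟩
      omega
  have hγm : (1 : ℝ) ≤ γ m := by
    have := key m hkm hmN h0; linarith [hγk]
  have hone : ∀ l ∈ Finset.Icc k m, γ l = 1 := by
    intro l hl
    simp only [Finset.mem_Icc] at hl
    have h₁ := hmono l m hl.2 hmN
    have h₂ := (hγ01 l (by omega)).2
    linarith
  have hsub : Finset.Icc k m ⊆ Finset.Icc k N := Finset.Icc_subset_Icc_right hmN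
  have hle : ∑ l ∈ Finset.Icc k m, γ l ≤ ∑ l ∈ Finset.Icc k N, γ l := by
    refine Finset.sum_le_sum_of_subset_of_nonneg hsub ?_
    intro i hi _
    simp only [Finset.mem_Icc] at hi
    exact (hγ01 i (by omega)).1
  have hsum : ∑ l ∈ Finset.Icc k m, γ l = ((m + 1 - k : ℕ) : ℝ) := by
    rw [Finset.sum_congr rfl hone, Finset.sum_const, Nat.card_Icc]
    simp
  have hcast : ((m + 1 - k : ℕ) : ℝ) = (m : ℝ) + 1 - k := by
    rw [Nat.cast_sub (by omega)]; push_cast; ring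
  rw [hsum, hcast] at hle
  linarith
end

section
/- Let I be a finite set of m mobile agents and J a finite set of n ≤ m target destinations, with initial agent positions p_i(0) and destinations g_j in a real normed vector space, and assignment weights W_{i,j} = ‖g_j − p_i(0)‖. Let Π* be a sequential bottleneck optimising assignment for these weights, with l-th order bottleneck agent i*_l, l-th order bottleneck task j*_l, and l-th order robustness margin μ_l for l = 1, …, n, and assume min_{l} μ_l > s for a given safety distance s > 0. Let ε > 0 be arbitrarily small, let η(t) > 0 be a shared time-varying coordination variable, and for each l define A_{i*_l}(s) = min_{l' ≤ l} (W_{i*_{l'}, j*_{l'}} + μ_{l'}) − (1/2)(min_{l''} μ_{l''} + s), η_{i*_l}(t, s) = min(η(t), A_{i*_l}(s)), ζ_{i*_l}(t, s) = A_{i*_l}(s) + (1/2)(min_{l''} μ_{l''} − s) − η_{i*_l}(t, s), and the local position constraint set H_{i*_l}(t, s) = {p : ‖p − p_{i*_l}(0)‖ ≤ η_{i*_l}(t, s) − ε and ‖g_{j*_l} − p‖ ≤ ζ_{i*_l}(t, s) − ε}; for each unassigned agent i' define H_{i'}(t, s) = {p : ‖p − p_{i'}(0)‖ ≤ η_{i*_n}(t,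 s) − ε}. If at time t ≥ 0 every agent i ∈ I has position p_i(t) ∈ H_i(t, s), then for every assigned agent i*_l (l = 1, …, n) and every other agent i' ∈ I \ {i*_l}, the positions are separated by more than the safety distance: ‖p_{i*_l}(t) − p_{i'}(t)‖ > s. -/
namespace SeqBottleneck

variable {ι κ : Type*} [DecidableEq ι] [DecidableEq κ]

/-- The set of assignments allocating every task in `J` to pairwise-distinct
agents in `I`, using only edges from `E` (Definition 1, Assignment). -/
def Assignments (I : Finset ι) (J : Finset κ) (E : Finset (ι × κ)) : Set (κ → ι) :=
  {a | Set.InjOn a ↑J ∧ ∀ j ∈ J, a j ∈ I ∧ (a j, j) ∈ E}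

/-- The largest weight of an assigned agent–task pair of assignment `a`. -/
noncomputable def bvalue (W : ι → κ → ℝ) (J : Finset κ) (a : κ → ι) : ℝ :=
  sSup ((fun j => W (a j) j) '' ↑J)

/-- The optimal bottleneck weight over all assignments on `(I, J, E)`
(Definition 2, Bottleneck assignment). -/
noncomputable def B (W : ι → κ → ℝ) (I : Finset ι) (J : Finset κ)
    (E : Finset (ι × κ)) : ℝ :=
  sInf (bvalue W J '' Assignments I J E)

/-- The edges of `E` whose weight equals the bottleneck weight. -/
def bottleneckEdges (W : ι → κ → ℝ) (I : Finset ι) (J : Finset κ)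
    (E : Finset (ι × κ)) : Set (ι × κ) :=
  {e | e ∈ E ∧ W e.1 e.2 = B W I J E}

/-- The robustness margin of the complete bipartite graph on `(I, J)`;
`⊤` for a single-edge graph (Definition 3, Robustness margin). -/
noncomputable def margin (W : ι → κ → ℝ) (I : Finset ι) (J : Finset κ) : EReal :=
  if I.card = 1 ∧ J.card = 1 then ⊤
  else ((sSup {x : ℝ | ∃ e ∈ bottleneckEdges W I J (I ×ˢ J),
      x = B W I J ((I ×ˢ J).erase e)} - B W I J (I ×ˢ J) : ℝ) : EReal)

/-- Maximum-margin bottleneck edges of the complete bipartite graph on `(I, J)`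
(Definition 3, Robustness margin). -/
def maxMarginEdges (W : ι → κ → ℝ) (I : Finset ι) (J : Finset κ) : Set (ι × κ) :=
  if I.card = 1 ∧ J.card = 1 then ↑(I ×ˢ J)
  else {e ∈ bottleneckEdges W I J (I ×ˢ J) |
    ∀ e' ∈ bottleneckEdges W I J (I ×ˢ J),
      B W I J ((I ×ˢ J).erase e') ≤ B W I J ((I ×ˢ J).erase e)}

-- Auxiliary lemmas

lemma le_bvalue (W : ι → κ → ℝ) (J : Finset κ) (a : κ → ι) {j : κ} (hj : j ∈ J) :
    W (a j) j ≤ bvalue W J a :=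
  le_csSup ((J.finite_toSet.image _).bddAbove) ⟨j, hj, rfl⟩

lemma bvalue_le (W : ι → κ → ℝ) {J : Finset κ} (hJ : J.Nonempty) (a : κ → ι) {c : ℝ}
    (h : ∀ j ∈ J, W (a j) j ≤ c) : bvalue W J a ≤ c :=
  csSup_le (Set.Nonempty.image _ (Finset.coe_nonempty.mpr hJ))
    (by rintro x ⟨j, hj, rfl⟩; exact h j hj)

lemma bvalue_nonneg (W : ι → κ → ℝ) (hW : ∀ i j, 0 ≤ W i j) {J : Finset κ}
    (hJ : J.Nonempty) (a : κ → ι) : 0 ≤ bvalue W J a := by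
  obtain ⟨j, hj⟩ := hJ
  exact (hW (a j) j).trans (le_bvalue W J a hj)

lemma B_le_bvalue (W : ι → κ → ℝ) (hW : ∀ i j, 0 ≤ W i j) (I : Finset ι) {J : Finset κ}
    (hJ : J.Nonempty) (E : Finset (ι × κ)) {a : κ → ι} (ha : a ∈ Assignments I J E) :
    B W I J E ≤ bvalue W J a :=
  csInf_le ⟨0, by rintro x ⟨a', _, rfl⟩; exact bvalue_nonneg W hW hJ a'⟩ ⟨a, ha, rfl⟩

lemma margin_spec (W : ι → κ → ℝ) (I : Finset ι) (J : Finset κ)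
    (h : ¬(I.card = 1 ∧ J.card = 1)) {e : ι × κ} (he : e ∈ maxMarginEdges W I J) :
    W e.1 e.2 = B W I J (I ×ˢ J) ∧
    margin W I J = ((B W I J ((I ×ˢ J).erase e) - B W I J (I ×ˢ J) : ℝ) : EReal) := by
  rw [maxMarginEdges, if_neg h] at he
  obtain ⟨⟨heE, heW⟩, hmax⟩ := he
  refine ⟨heW, ?_⟩
  rw [margin, if_neg h]
  have : sSup {x : ℝ | ∃ e' ∈ bottleneckEdges W I J (I ×ˢ J),
      x = B W I J ((I ×ˢ J).erase e')} = B W I J ((I ×ˢ J).erase e) := by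
    apply le_antisymm
    · exact csSup_le ⟨_, ⟨e, ⟨heE, heW⟩, rfl⟩⟩ (by rintro x ⟨e', he', rfl⟩; exact hmax e' he')
    · exact le_csSup ⟨_, by rintro x ⟨e', he', rfl⟩; exact hmax e' he'⟩ ⟨e, ⟨heE, heW⟩, rfl⟩
  rw [this]

lemma maxMargin_mem_prod (W : ι → κ → ℝ) (I : Finset ι) (J : Finset κ)
    {e : ι × κ} (he : e ∈ maxMarginEdges W I J) : e ∈ I ×ˢ J := by
  rw [maxMarginEdges] at he
  split_ifs at he with hc
  · exact_mod_cast he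
  · exact he.1.1

lemma reroute_mem (I : Finset ι) (J : Finset κ) {a : κ → ι}
    (ha : a ∈ Assignments I J (I ×ˢ J)) {j₀ : κ} (hj₀ : j₀ ∈ J) {i' : ι} (hi'I : i' ∈ I)
    (hi' : ∀ j ∈ J, a j ≠ i') :
    Function.update a j₀ i' ∈ Assignments I J ((I ×ˢ J).erase (a j₀, j₀)) := by
  obtain ⟨hinj, hmem⟩ := ha
  constructor
  · intro x hx y hy hxy
    by_cases hxj : x = j₀ <;> by_cases hyj : y = j₀
    · rw [hxj, hyj]
    · subst hxj
      rw [Function.update_self, Function.update_of_ne hyj] at hxy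
      exact absurd hxy.symm (hi' y hy)
    · subst hyj
      rw [Function.update_self, Function.update_of_ne hxj] at hxy
      exact absurd hxy (hi' x hx)
    · rw [Function.update_of_ne hxj, Function.update_of_ne hyj] at hxy
      exact hinj hx hy hxy
  · intro j hj
    by_cases hjj : j = j₀
    · rw [hjj, Function.update_self]
      refine ⟨hi'I, Finset.mem_erase.mpr ⟨?_, Finset.mem_product.mpr ⟨hi'I, hj₀⟩⟩⟩
      simp only [Ne, Prod.mk.injEq, not_and]
      intro h
      exact absurd h.symm (hi' j₀ hj₀)
    · rw [Function.update_of_ne hjj]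
      refine ⟨(hmem j hj).1, Finset.mem_erase.mpr ⟨?_, Finset.mem_product.mpr ⟨(hmem j hj).1, hj⟩⟩⟩
      simp only [Ne, Prod.mk.injEq, not_and]
      exact fun _ => hjj

lemma swap_mem (I : Finset ι) (J : Finset κ) {a : κ → ι}
    (ha : a ∈ Assignments I J (I ×ˢ J)) {j₀ j₁ : κ} (hj₀ : j₀ ∈ J) (hj₁ : j₁ ∈ J)
    (hne : j₀ ≠ j₁) :
    a ∘ (Equiv.swap j₀ j₁) ∈ Assignments I J ((I ×ˢ J).erase (a j₀, j₀)) := by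
  obtain ⟨hinj, hmem⟩ := ha
  have hswapJ : ∀ j ∈ J, (Equiv.swap j₀ j₁) j ∈ J := by
    intro j hj
    rcases eq_or_ne j j₀ with rfl | h0
    · rwa [Equiv.swap_apply_left]
    · rcases eq_or_ne j j₁ with rfl | h1
      · rwa [Equiv.swap_apply_right]
      · rwa [Equiv.swap_apply_of_ne_of_ne h0 h1]
  have hane : a j₁ ≠ a j₀ := fun h => hne.symm (hinj hj₁ hj₀ h)
  refine ⟨?_, ?_⟩
  · intro x hx y hy hxy
    exact (Equiv.swap j₀ j₁).injective (hinj (hswapJ x hx) (hswapJ y hy) hxy)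
  · intro j hj
    refine ⟨(hmem _ (hswapJ j hj)).1,
      Finset.mem_erase.mpr ⟨?_, Finset.mem_product.mpr ⟨(hmem _ (hswapJ j hj)).1, hj⟩⟩⟩
    simp only [Ne, Prod.mk.injEq, not_and, Function.comp_apply]
    rcases eq_or_ne j j₀ with rfl | h0
    · rw [Equiv.swap_apply_left]
      intro h
      exact absurd h hane
    · exact fun _ => h0

lemma key_sep {V : Type*} [NormedAddCommGroup V] {G rt qt q0 : V} {s ε X Y Z : ℝ}
    (hε : 0 < ε) (h1 : ‖G - rt‖ ≤ Z - ε) (h2 : ‖qt - q0‖ ≤ Y - ε)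
    (h3 : X ≤ ‖G - q0‖) (h4 : s ≤ X - Z - Y) : s < ‖rt - qt‖ := by
  have htri : ‖G - q0‖ ≤ ‖G - rt‖ + ‖rt - qt‖ + ‖qt - q0‖ := by
    have h : G - q0 = (G - rt) + (rt - qt) + (qt - q0) := by abel
    rw [h]
    exact norm_add₃_le
  linarith


end SeqBottleneck

/-- Proposition 1 of the paper. Agents that satisfy the local
position constraints derived from a sequential bottleneck optimising assignment,
whose robustness margins of all orders exceed the safety distance `s`, remain
separated from every assigned agent by more than `s`. -/
theorem stmt_16
    {V : Type*} [NormedAddCommGroup V] [NormedSpace ℝ V]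
    {ι κ : Type*} [Fintype ι] [Fintype κ] [DecidableEq ι] [DecidableEq κ]
    (m n : ℕ) (hm : Fintype.card ι = m) (hcn : Fintype.card κ = n)
    (hmn : n ≤ m) (hn1 : 1 ≤ n)
    -- agent trajectories, target destinations and assignment weights
    (p : ι → ℝ → V) (g : κ → V)
    (W : ι → κ → ℝ) (hW : ∀ i j, W i j = ‖g j - p i 0‖)
    -- the nested complete bipartite subgraphs of the sequential procedure
    (Isub : Fin n → Finset ι) (Jsub : Fin n → Finset κ)
    (istar : Fin n → ι) (jstar : Fin n → κ)
    (hI1 : Isub ⟨0, by omega⟩ = Finset.univ)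
    (hJ1 : Jsub ⟨0, by omega⟩ = Finset.univ)
    (hstar : ∀ l : Fin n,
      (istar l, jstar l) ∈ SeqBottleneck.maxMarginEdges W (Isub l) (Jsub l))
    (hInext : ∀ (l : Fin n) (h : (l : ℕ) + 1 < n),
      Isub ⟨(l : ℕ) + 1, h⟩ = (Isub l).erase (istar l))
    (hJnext : ∀ (l : Fin n) (h : (l : ℕ) + 1 < n),
      Jsub ⟨(l : ℕ) + 1, h⟩ = (Jsub l).erase (jstar l))
    -- the `l`-th order robustness margins
    (μ : Fin n → EReal) (hμ : ∀ l, μ l = SeqBottleneck.margin W (Isub l) (Jsub l))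
    -- `Π*`: a sequential bottleneck optimising assignment (Definition 4)
    (a : κ → ι)
    (ha : ∀ l : Fin n,
      a ∈ SeqBottleneck.Assignments (Isub l) (Jsub l) (Isub l ×ˢ Jsub l) ∧
      SeqBottleneck.bvalue W (Jsub l) a =
        SeqBottleneck.B W (Isub l) (Jsub l) (Isub l ×ˢ Jsub l))
    (hassign : ∀ l : Fin n, a (jstar l) = istar l)
    -- safety distance smaller than all robustness margins
    (s : ℝ) (hs : 0 < s) (hmargin : ∀ l, (s : EReal) < μ l)
    -- the local position constraint sets of Definition 5
    (ε : ℝ) (hε : 0 < ε)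
    (η : ℝ → ℝ) (hη : ∀ t, 0 < η t)
    (μmin : EReal) (hμmin : μmin = ⨅ l, μ l)
    (A : Fin n → EReal)
    (hA : ∀ l, A l =
      (⨅ (l' : Fin n) (_ : l' ≤ l), (((W (istar l') (jstar l') : ℝ) : EReal) + μ l'))
        - ((2⁻¹ : ℝ) : EReal) * (μmin + (s : EReal)))
    (ηl : Fin n → ℝ → EReal)
    (hηl : ∀ l t, ηl l t = min ((η t : ℝ) : EReal) (A l))
    (ζl : Fin n → ℝ → EReal)
    (hζl : ∀ l t, ζl l t = A l + ((2⁻¹ : ℝ) : EReal) * (μmin - (s : EReal)) - ηl l t)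
    (H : ι → ℝ → Set V)
    (hHassigned : ∀ l : Fin n, H (istar l) = fun t =>
      {q : V | ((‖q - p (istar l) 0‖ : ℝ) : EReal) ≤ ηl l t - ((ε : ℝ) : EReal) ∧
        ((‖g (jstar l) - q‖ : ℝ) : EReal) ≤ ζl l t - ((ε : ℝ) : EReal)})
    (hHfree : ∀ i : ι, (∀ l : Fin n, i ≠ istar l) → H i = fun t =>
      {q : V | ((‖q - p i 0‖ : ℝ) : EReal) ≤ ηl ⟨n - 1, by omega⟩ t - ((ε : ℝ) : EReal)})
    -- at time `t ≥ 0` all agents satisfy their local position constraints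
    (t : ℝ) (ht : 0 ≤ t)
    (hsat : ∀ i : ι, p i t ∈ H i t) :
    -- then every assigned agent is separated from all other agents by more than `s`
    ∀ (l : Fin n) (i' : ι), i' ≠ istar l → s < ‖p (istar l) t - p i' t‖ := by
  classical
  intro l i' hi'
  -- trivial case: only one agent
  by_cases hm1 : m = 1
  · exact absurd (Fintype.card_le_one_iff.mp (by omega) i' (istar l)) hi'
  have hm2 : 2 ≤ m := by omega
  have hWnn : ∀ i j, 0 ≤ W i j := by intro i j; rw [hW]; positivity
  -- membership of the max-margin edge
  have hmemIJ : ∀ l : Fin n, istar l ∈ Isub l ∧ jstar l ∈ Jsub l := by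
    intro l
    have h := SeqBottleneck.maxMargin_mem_prod W _ _ (hstar l)
    exact Finset.mem_product.mp h
  -- cardinalities
  have hcards : ∀ (k : ℕ) (hk : k < n),
      (Isub ⟨k, hk⟩).card = m - k ∧ (Jsub ⟨k, hk⟩).card = n - k := by
    intro k
    induction k with
    | zero =>
      intro hk
      constructor
      · rw [show Isub ⟨0, hk⟩ = Finset.univ from hI1]
        simp [hm]
      · rw [show Jsub ⟨0, hk⟩ = Finset.univ from hJ1]
        simp [hcn]
    | succ k ih =>
      intro hk
      have hk' : k < n := by omega
      have eI : Isub ⟨k + 1, hk⟩ = (Isub ⟨k, hk'⟩).erase (istar ⟨k, hk'⟩) := hInext ⟨k, hk'⟩ hk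
      have eJ : Jsub ⟨k + 1, hk⟩ = (Jsub ⟨k, hk'⟩).erase (jstar ⟨k, hk'⟩) := hJnext ⟨k, hk'⟩ hk
      rw [eI, eJ, Finset.card_erase_of_mem (hmemIJ _).1, Finset.card_erase_of_mem (hmemIJ _).2,
        (ih hk').1, (ih hk').2]
      omega
  have hIcard : ∀ l : Fin n, (Isub l).card = m - (l : ℕ) := fun l => (hcards l.1 l.2).1
  have hJcard : ∀ l : Fin n, (Jsub l).card = n - (l : ℕ) := fun l => (hcards l.1 l.2).2
  have hJne : ∀ l : Fin n, (Jsub l).Nonempty := by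
    intro l
    rw [← Finset.card_pos, hJcard]
    omega
  -- nesting
  have hnest : ∀ (k : ℕ) (hk : k < n) (l₁ : Fin n), (l₁ : ℕ) < k →
      Isub ⟨k, hk⟩ ⊆ (Isub l₁).erase (istar l₁) ∧
      Jsub ⟨k, hk⟩ ⊆ (Jsub l₁).erase (jstar l₁) := by
    intro k
    induction k with
    | zero => intro hk l₁ h; omega
    | succ k ih =>
      intro hk l₁ hl₁
      have hk' : k < n := by omega
      have eI : Isub ⟨k + 1, hk⟩ = (Isub ⟨k, hk'⟩).erase (istar ⟨k, hk'⟩) := hInext ⟨k, hk'⟩ hk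
      have eJ : Jsub ⟨k + 1, hk⟩ = (Jsub ⟨k, hk'⟩).erase (jstar ⟨k, hk'⟩) := hJnext ⟨k, hk'⟩ hk
      rcases Nat.lt_or_ge (l₁ : ℕ) k with h | h
      · exact ⟨eI ▸ (Finset.erase_subset _ _).trans (ih hk' l₁ h).1,
          eJ ▸ (Finset.erase_subset _ _).trans (ih hk' l₁ h).2⟩
      · have : l₁ = ⟨k, hk'⟩ := Fin.ext (show (l₁ : ℕ) = k by omega)
        subst this
        exact ⟨eI ▸ subset_rfl, eJ ▸ subset_rfl⟩
  have hnest' : ∀ {l₁ l₂ : Fin n}, l₁ < l₂ →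
      (istar l₂ ∈ Isub l₁ ∧ istar l₂ ≠ istar l₁) ∧
      (jstar l₂ ∈ Jsub l₁ ∧ jstar l₂ ≠ jstar l₁) := by
    intro l₁ l₂ h
    have h2 := hnest l₂.1 l₂.2 l₁ h
    have hi := Finset.mem_erase.mp (h2.1 (hmemIJ l₂).1)
    have hj := Finset.mem_erase.mp (h2.2 (hmemIJ l₂).2)
    exact ⟨⟨hi.2, hi.1⟩, ⟨hj.2, hj.1⟩⟩
  -- every task in `Jsub l` is some later `jstar`
  have hcover : ∀ (d k : ℕ) (hk : k < n), n - k ≤ d → ∀ j ∈ Jsub ⟨k, hk⟩,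
      ∃ l'' : Fin n, k ≤ (l'' : ℕ) ∧ j = jstar l'' := by
    intro d
    induction d with
    | zero => intro k hk h; omega
    | succ d ih =>
      intro k hk hd j hj
      by_cases hej : j = jstar ⟨k, hk⟩
      · exact ⟨⟨k, hk⟩, le_refl _, hej⟩
      by_cases hk1 : k + 1 < n
      · have eJ : Jsub ⟨k + 1, hk1⟩ = (Jsub ⟨k, hk⟩).erase (jstar ⟨k, hk⟩) := hJnext ⟨k, hk⟩ hk1
        have hj' : j ∈ Jsub ⟨k + 1, hk1⟩ := eJ ▸ Finset.mem_erase.mpr ⟨hej, hj⟩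
        obtain ⟨l'', h1, h2⟩ := ih (k + 1) hk1 (by omega) j hj'
        exact ⟨l'', by omega, h2⟩
      · exact absurd (Finset.card_le_one.mp (by rw [(hcards k hk).2]; omega) j hj _
          (hmemIJ ⟨k, hk⟩).2) hej
  -- unassigned agents stay in every subgraph, and are never the image of `a`
  have hfreeI : ∀ (i'' : ι), (∀ l'', i'' ≠ istar l'') → ∀ (k : ℕ) (hk : k < n),
      i'' ∈ Isub ⟨k, hk⟩ := by
    intro i'' hi'' k
    induction k with
    | zero => intro hk; rw [show Isub ⟨0, hk⟩ = Finset.univ from hI1]; exact Finset.mem_univ _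
    | succ k ih =>
      intro hk
      have hk' : k < n := by omega
      have eI : Isub ⟨k + 1, hk⟩ = (Isub ⟨k, hk'⟩).erase (istar ⟨k, hk'⟩) := hInext ⟨k, hk'⟩ hk
      exact eI ▸ Finset.mem_erase.mpr ⟨hi'' _, ih hk'⟩
  have hfreea : ∀ (i'' : ι), (∀ l'', i'' ≠ istar l'') → ∀ (l₀ : Fin n), ∀ j ∈ Jsub l₀,
      a j ≠ i'' := by
    intro i'' hi'' l₀ j hj
    obtain ⟨l'', _, rfl⟩ := hcover (n - l₀.1) l₀.1 l₀.2 le_rfl j hj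
    rw [hassign l'']
    exact (hi'' l'').symm
  -- abbreviations for bottleneck values
  set Bl : Fin n → ℝ :=
    fun l₀ => SeqBottleneck.B W (Isub l₀) (Jsub l₀) (Isub l₀ ×ˢ Jsub l₀) with hBldef
  set D : Fin n → ℝ := fun l₀ => SeqBottleneck.B W (Isub l₀) (Jsub l₀)
      ((Isub l₀ ×ˢ Jsub l₀).erase (istar l₀, jstar l₀)) with hDdef
  set μr : Fin n → ℝ := fun l₀ => D l₀ - Bl l₀ with hμrdef
  have hmu_spec : ∀ l₀ : Fin n, ¬((Isub l₀).card = 1 ∧ (Jsub l₀).card = 1) →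
      W (istar l₀) (jstar l₀) = Bl l₀ ∧ μ l₀ = ((μr l₀ : ℝ) : EReal) ∧ s < μr l₀ := by
    intro l₀ h
    obtain ⟨h1, h2⟩ := SeqBottleneck.margin_spec W _ _ h (hstar l₀)
    have hμl : μ l₀ = ((μr l₀ : ℝ) : EReal) := by rw [hμ l₀, h2]
    refine ⟨h1, hμl, ?_⟩
    have hm := hmargin l₀
    rw [hμl] at hm
    exact_mod_cast hm
  -- reroute bound for unassigned agents
  have hcombA : ∀ (l₀ : Fin n) (i'' : ι), (∀ l'', i'' ≠ istar l'') →
      Bl l₀ + μr l₀ ≤ W i'' (jstar l₀) := by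
    intro l₀ i'' hi''
    have hi''I : i'' ∈ Isub l₀ := hfreeI i'' hi'' l₀.1 l₀.2
    have hns : ¬((Isub l₀).card = 1 ∧ (Jsub l₀).card = 1) := by
      rintro ⟨h1, -⟩
      have h2 : 1 < (Isub l₀).card :=
        Finset.one_lt_card.mpr ⟨i'', hi''I, istar l₀, (hmemIJ l₀).1, hi'' l₀⟩
      omega
    obtain ⟨hWB, hμl, hsμ⟩ := hmu_spec l₀ hns
    have hmem := SeqBottleneck.reroute_mem (Isub l₀) (Jsub l₀) (ha l₀).1 (hmemIJ l₀).2 hi''I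
      (hfreea i'' hi'' l₀)
    rw [hassign l₀] at hmem
    have hD : D l₀ ≤ SeqBottleneck.bvalue W (Jsub l₀) (Function.update a (jstar l₀) i'') :=
      SeqBottleneck.B_le_bvalue W hWnn _ (hJne l₀) _ hmem
    have hbv : SeqBottleneck.bvalue W (Jsub l₀) (Function.update a (jstar l₀) i'') ≤
        max (Bl l₀) (W i'' (jstar l₀)) := by
      apply SeqBottleneck.bvalue_le W (hJne l₀)
      intro j hj
      by_cases hjj : j = jstar l₀
      · rw [hjj, Function.update_self]; exact le_max_right _ _
      · rw [Function.update_of_ne hjj]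
        exact le_trans (le_trans (SeqBottleneck.le_bvalue W _ a hj) (le_of_eq (ha l₀).2))
          (le_max_left _ _)
    have hfin := hD.trans hbv
    have hDval : D l₀ = Bl l₀ + μr l₀ := by simp only [hμrdef]; ring
    rw [hDval] at hfin
    rcases le_max_iff.mp hfin with h | h
    · linarith
    · exact h
  -- swap bound for pairs of assigned agents
  have hcombB : ∀ lmin lmax : Fin n, lmin < lmax →
      Bl lmin + μr lmin ≤ W (istar lmax) (jstar lmin) ∨
      Bl lmin + μr lmin ≤ W (istar lmin) (jstar lmax) := by
    intro lmin lmax hlt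
    have hjmem : jstar lmax ∈ Jsub lmin := (hnest' hlt).2.1
    have hjne : jstar lmin ≠ jstar lmax := Ne.symm (hnest' hlt).2.2
    have hns : ¬((Isub lmin).card = 1 ∧ (Jsub lmin).card = 1) := by
      rintro ⟨-, h2⟩
      have h3 : 1 < (Jsub lmin).card :=
        Finset.one_lt_card.mpr ⟨jstar lmin, (hmemIJ lmin).2, jstar lmax, hjmem, hjne⟩
      omega
    obtain ⟨hWB, hμl, hsμ⟩ := hmu_spec lmin hns
    have hmem := SeqBottleneck.swap_mem (Isub lmin) (Jsub lmin) (ha lmin).1 (hmemIJ lmin).2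
      hjmem hjne
    rw [hassign lmin] at hmem
    have hD : D lmin ≤
        SeqBottleneck.bvalue W (Jsub lmin) (a ∘ Equiv.swap (jstar lmin) (jstar lmax)) :=
      SeqBottleneck.B_le_bvalue W hWnn _ (hJne lmin) _ hmem
    have hbv : SeqBottleneck.bvalue W (Jsub lmin) (a ∘ Equiv.swap (jstar lmin) (jstar lmax)) ≤
        max (Bl lmin) (max (W (istar lmax) (jstar lmin)) (W (istar lmin) (jstar lmax))) := by
      apply SeqBottleneck.bvalue_le W (hJne lmin)
      intro j hj
      rcases eq_or_ne j (jstar lmin) with rfl | h0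
      · simp only [Function.comp_apply, Equiv.swap_apply_left, hassign]
        exact le_trans (le_max_left _ _) (le_max_right _ _)
      rcases eq_or_ne j (jstar lmax) with rfl | h1
      · simp only [Function.comp_apply, Equiv.swap_apply_right, hassign]
        exact le_trans (le_max_right _ _) (le_max_right _ _)
      · simp only [Function.comp_apply, Equiv.swap_apply_of_ne_of_ne h0 h1]
        exact le_trans (le_trans (SeqBottleneck.le_bvalue W _ a hj) (le_of_eq (ha lmin).2))
          (le_max_left _ _)
    have hfin := hD.trans hbv
    have hDval : D lmin = Bl lmin + μr lmin := by simp only [hμrdef]; ring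
    rw [hDval] at hfin
    rcases le_max_iff.mp hfin with h | h
    · left; linarith
    · exact le_max_iff.mp h
  -- μmin is a real number
  have hn0 : 0 < n := by omega
  have hns0 : ¬((Isub (⟨0, hn0⟩ : Fin n)).card = 1 ∧ (Jsub ⟨0, hn0⟩).card = 1) := by
    rintro ⟨h1, -⟩
    have hv : (((⟨0, hn0⟩ : Fin n)) : ℕ) = 0 := rfl
    rw [hIcard, hv] at h1
    omega
  obtain ⟨hWB0, hμl0, hsμ0⟩ := hmu_spec ⟨0, hn0⟩ hns0
  have hμminle : μmin ≤ μ ⟨0, hn0⟩ := by rw [hμmin]; exact iInf_le μ _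
  have hsμmin : (s : EReal) ≤ μmin := by rw [hμmin]; exact le_iInf fun l'' => (hmargin l'').le
  have hμminne_top : μmin ≠ ⊤ := by
    rw [hμl0] at hμminle
    exact (hμminle.trans_lt (EReal.coe_lt_top _)).ne
  have hμminne_bot : μmin ≠ ⊥ := ((EReal.bot_lt_coe s).trans_le hsμmin).ne'
  obtain ⟨μminR, hμmincoe⟩ : ∃ x : ℝ, ((x : ℝ) : EReal) = μmin :=
    ⟨μmin.toReal, EReal.coe_toReal hμminne_top hμminne_bot⟩
  have hsμminR : s ≤ μminR := by rw [← EReal.coe_le_coe_iff, hμmincoe]; exact hsμmin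
  set c : ℝ := 2⁻¹ * (μminR + s) with hcdef
  set d : ℝ := 2⁻¹ * (μminR - s) with hddef
  have hcd : c - d = s := by rw [hcdef, hddef]; ring
  -- A is real valued
  have hAub : ∀ l₀ : Fin n,
      A l₀ ≤ ((W (istar ⟨0, hn0⟩) (jstar ⟨0, hn0⟩) + μr ⟨0, hn0⟩ - c : ℝ) : EReal) := by
    intro l₀
    rw [hA l₀]
    have h1 : (⨅ (l' : Fin n) (_ : l' ≤ l₀), (((W (istar l') (jstar l') : ℝ) : EReal) + μ l'))
        ≤ ((W (istar ⟨0, hn0⟩) (jstar ⟨0, hn0⟩) : ℝ) : EReal) + μ ⟨0, hn0⟩ :=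
      iInf_le_of_le ⟨0, hn0⟩ (iInf_le _ (Fin.le_def.mpr (Nat.zero_le _)))
    refine le_trans (EReal.sub_le_sub h1 le_rfl) (le_of_eq ?_)
    rw [hμl0, hcdef, ← hμmincoe]
    push_cast
    ring
  have hAlb : ∀ l₀ : Fin n, ((s - c : ℝ) : EReal) ≤ A l₀ := by
    intro l₀
    rw [hA l₀]
    have h1 : ((s : ℝ) : EReal) ≤
        ⨅ (l' : Fin n) (_ : l' ≤ l₀), (((W (istar l') (jstar l') : ℝ) : EReal) + μ l') := by
      refine le_iInf₂ fun l' _ => ?_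
      calc ((s : ℝ) : EReal) = 0 + ((s : ℝ) : EReal) := (zero_add _).symm
        _ ≤ ((W (istar l') (jstar l') : ℝ) : EReal) + μ l' :=
          add_le_add (by exact_mod_cast hWnn (istar l') (jstar l')) (hmargin l').le
    refine le_trans (le_of_eq ?_) (EReal.sub_le_sub h1 le_rfl)
    rw [hcdef, ← hμmincoe]
    push_cast
    ring
  obtain ⟨Ar, hAr⟩ : ∃ Ar : Fin n → ℝ, ∀ l₀, ((Ar l₀ : ℝ) : EReal) = A l₀ :=
    ⟨fun l₀ => (A l₀).toReal, fun l₀ =>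
      EReal.coe_toReal ((hAub l₀).trans_lt (EReal.coe_lt_top _)).ne
        (((EReal.bot_lt_coe _).trans_le (hAlb l₀)).ne')⟩
  have hAmonoE : ∀ {l₁ l₂ : Fin n}, l₁ ≤ l₂ → A l₂ ≤ A l₁ := by
    intro l₁ l₂ h12
    rw [hA l₁, hA l₂]
    refine EReal.sub_le_sub (le_iInf₂ fun l' h' => ?_) le_rfl
    exact iInf_le_of_le l' (iInf_le _ (h'.trans h12))
  have hAmono : ∀ {l₁ l₂ : Fin n}, l₁ ≤ l₂ → Ar l₂ ≤ Ar l₁ := by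
    intro l₁ l₂ h12
    rw [← EReal.coe_le_coe_iff, hAr l₁, hAr l₂]
    exact hAmonoE h12
  have hAkey : ∀ (l' l₀ : Fin n), l' ≤ l₀ → ¬((Isub l').card = 1 ∧ (Jsub l').card = 1) →
      Ar l₀ ≤ W (istar l') (jstar l') + μr l' - c := by
    intro l' l₀ hle hns
    obtain ⟨-, hμl, -⟩ := hmu_spec l' hns
    rw [← EReal.coe_le_coe_iff, hAr l₀, hA l₀]
    have h1 : (⨅ (l'' : Fin n) (_ : l'' ≤ l₀), (((W (istar l'') (jstar l'') : ℝ) : EReal) + μ l''))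
        ≤ ((W (istar l') (jstar l') : ℝ) : EReal) + μ l' :=
      iInf_le_of_le l' (iInf_le _ hle)
    refine le_trans (EReal.sub_le_sub h1 le_rfl) (le_of_eq ?_)
    rw [hμl, hcdef, ← hμmincoe]
    push_cast
    ring
  -- real-valued constraint radii
  set ηr : Fin n → ℝ := fun l₀ => min (η t) (Ar l₀) with hηrdef
  set ζr : Fin n → ℝ := fun l₀ => Ar l₀ + d - ηr l₀ with hζrdef
  have hcoe_min : ∀ (x y : ℝ), ((min x y : ℝ) : EReal) = min (x : EReal) (y : EReal) := by
    intro x y; rcases le_total x y with h | h <;> simp [min_def, h]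
  have hηcoe : ∀ l₀ : Fin n, ηl l₀ t = ((ηr l₀ : ℝ) : EReal) := by
    intro l₀
    rw [hηl, hηrdef]
    simp only []
    rw [hcoe_min, hAr l₀]
  have hζcoe : ∀ l₀ : Fin n, ζl l₀ t = ((ζr l₀ : ℝ) : EReal) := by
    intro l₀
    rw [hζl, hηcoe, hζrdef, hddef, ← hAr l₀, ← hμmincoe]
    push_cast
    rfl
  have hηdiff : ∀ {l₁ l₂ : Fin n}, l₁ ≤ l₂ → ηr l₁ - ηr l₂ ≤ Ar l₁ - Ar l₂ := by
    intro l₁ l₂ h12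
    have h2 := hAmono h12
    simp only [hηrdef, min_def]
    split_ifs <;> linarith
  -- the real-valued local position constraints
  have hClc : ∀ l₀ : Fin n, ‖p (istar l₀) t - p (istar l₀) 0‖ ≤ ηr l₀ - ε ∧
      ‖g (jstar l₀) - p (istar l₀) t‖ ≤ ζr l₀ - ε := by
    intro l₀
    have h := hsat (istar l₀)
    rw [hHassigned l₀] at h
    obtain ⟨h1, h2⟩ := h
    rw [hηcoe l₀] at h1
    rw [hζcoe l₀] at h2
    exact ⟨by exact_mod_cast h1, by exact_mod_cast h2⟩
  have hCfree : ∀ i'' : ι, (∀ l'', i'' ≠ istar l'') →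
      ‖p i'' t - p i'' 0‖ ≤ ηr ⟨n - 1, by omega⟩ - ε := by
    intro i'' hi''
    have h := hsat i''
    rw [hHfree i'' hi''] at h
    simp only [Set.mem_setOf_eq] at h
    rw [hηcoe] at h
    exact_mod_cast h
  -- final case analysis
  by_cases hex : ∃ l'', i' = istar l''
  · obtain ⟨l'', rfl⟩ := hex
    have hlne : l'' ≠ l := fun h => hi' (congrArg istar h)
    have hnsmin : ∀ {l₁ l₂ : Fin n}, l₁ < l₂ →
        ¬((Isub l₁).card = 1 ∧ (Jsub l₁).card = 1) := by
      intro l₁ l₂ h12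
      rintro ⟨-, h2⟩
      rw [hJcard] at h2
      have h3 : (l₁ : ℕ) < (l₂ : ℕ) := h12
      have h4 := l₂.2
      omega
    rcases lt_or_gt_of_ne hlne with hlt | hgt
    · -- case l'' < l
      have hns := hnsmin hlt
      obtain ⟨hWB, -, hsμ⟩ := hmu_spec l'' hns
      have hAk := hAkey l'' l'' le_rfl hns
      rw [hWB] at hAk
      rcases hcombB l'' l hlt with hX | hY
      · rw [norm_sub_rev]
        refine SeqBottleneck.key_sep (X := Bl l'' + μr l'') hε (hClc l'').2 (hClc l).1 ?_ ?_
        · rw [← hW]; exact hX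
        · have h1 : ηr l ≤ ηr l'' := min_le_min le_rfl (hAmono hlt.le)
          have h2 : ζr l'' = Ar l'' + d - ηr l'' := rfl
          linarith
      · refine SeqBottleneck.key_sep (X := Bl l'' + μr l'') hε (hClc l).2 (hClc l'').1 ?_ ?_
        · rw [← hW]; exact hY
        · have hd1 := hηdiff hlt.le
          have h2 : ζr l = Ar l + d - ηr l := rfl
          linarith
    · -- case l < l''
      have hns := hnsmin hgt
      obtain ⟨hWB, -, hsμ⟩ := hmu_spec l hns
      have hAk := hAkey l l le_rfl hns
      rw [hWB] at hAk
      rcases hcombB l l'' hgt with hX | hY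
      · refine SeqBottleneck.key_sep (X := Bl l + μr l) hε (hClc l).2 (hClc l'').1 ?_ ?_
        · rw [← hW]; exact hX
        · have h1 : ηr l'' ≤ ηr l := min_le_min le_rfl (hAmono hgt.le)
          have h2 : ζr l = Ar l + d - ηr l := rfl
          linarith
      · rw [norm_sub_rev]
        refine SeqBottleneck.key_sep (X := Bl l + μr l) hε (hClc l'').2 (hClc l).1 ?_ ?_
        · rw [← hW]; exact hY
        · have hd1 := hηdiff hgt.le
          have h2 : ζr l'' = Ar l'' + d - ηr l'' := rfl
          linarith
  · push_neg at hex
    have hnsl : ¬((Isub l).card = 1 ∧ (Jsub l).card = 1) := by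
      rintro ⟨h1, -⟩
      have h2 : 1 < (Isub l).card :=
        Finset.one_lt_card.mpr ⟨i', hfreeI i' hex l.1 l.2, istar l, (hmemIJ l).1, hex l⟩
      omega
    obtain ⟨hWB, -, hsμ⟩ := hmu_spec l hnsl
    have hAk := hAkey l l le_rfl hnsl
    rw [hWB] at hAk
    have hX := hcombA l i' hex
    refine SeqBottleneck.key_sep (X := Bl l + μr l) hε (hClc l).2 (hCfree i' hex) ?_ ?_
    · rw [← hW]; exact hX
    · have h1 : ηr ⟨n - 1, by omega⟩ ≤ ηr l :=
        min_le_min le_rfl (hAmono (Fin.le_def.mpr (show (l : ℕ) ≤ n - 1 by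
          have := l.isLt; omega)))
      have h2 : ζr l = Ar l + d - ηr l := rfl
      linarith
end

section
/- Let Q(t, υ) = s²·(t − (2L − c²)/(2s))² − c⁴/4 + υ·c²·L with s > 0, c > 0, L > 0 and 2L > c². Suppose there exists υ' with 0 ≤ υ' < c²/(4L) such that Q(t, υ') ≥ 0 for all t ∈ [0, t'] for some t' > (4L − c²)/(4s). Then a contradiction arises; equivalently, since the burn-through time t^b = (2L − c²)/(2s) satisfies t^b ≤ (4L − c²)/(4s) and Q(t^b, υ') < Q(t^b, c²/(4L)) = 0, there is no υ' < c²/(4L) for which the no-burn-through condition Q(·, υ') ≥ 0 holds on an interval [0, t'] extending beyond (4L − c²)/(4s). -/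
/-- With `2L > c²` and `0 ≤ υ' < c²/(4L)`, the burn-through time
`t^b = (2L − c²)/(2s)` satisfies `t^b ≤ (4L − c²)/(4s)`,
`Q(t^b, c²/(4L)) = 0`, `Q(t^b, υ') < Q(t^b, c²/(4L))`, and consequently there
is no `t' > (4L − c²)/(4s)` such that the no-burn-through condition
`Q(·, υ') ≥ 0` holds on all of `[0, t']`. -/
theorem stmt_17
    (s c L : ℝ) (hs : 0 < s) (hc : 0 < c) (hL : 0 < L) (h2L : 2 * L > c ^ 2)
    (Q : ℝ → ℝ → ℝ)
    (hQ : ∀ t υ : ℝ,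
      Q t υ = s ^ 2 * (t - (2 * L - c ^ 2) / (2 * s)) ^ 2 - c ^ 4 / 4 + υ * c ^ 2 * L)
    (tb : ℝ) (htb : tb = (2 * L - c ^ 2) / (2 * s))
    (υ' : ℝ) (hυ0 : 0 ≤ υ') (hυb : υ' < c ^ 2 / (4 * L)) :
    tb ≤ (4 * L - c ^ 2) / (4 * s) ∧
    Q tb (c ^ 2 / (4 * L)) = 0 ∧
    Q tb υ' < Q tb (c ^ 2 / (4 * L)) ∧
    ¬ ∃ t' > (4 * L - c ^ 2) / (4 * s), ∀ t ∈ Set.Icc (0 : ℝ) t', Q t υ' ≥ 0 := by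

  have h1 : tb ≤ (4 * L - c ^ 2) / (4 * s) := by
    rw [htb, div_le_div_iff₀ (by positivity) (by positivity)]
    nlinarith [sq_nonneg c]
  have hQb : Q tb (c ^ 2 / (4 * L)) = 0 := by
    rw [hQ, htb]
    field_simp
    ring
  have hQlt : Q tb υ' < Q tb (c ^ 2 / (4 * L)) := by
    rw [hQ, hQ]
    have : υ' * c ^ 2 * L < c ^ 2 / (4 * L) * c ^ 2 * L := by
      have hc2 : 0 < c ^ 2 * L := by positivity
      nlinarith
    linarith
  refine ⟨h1, hQb, hQlt, ?_⟩
  rintro ⟨t', ht', hall⟩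
  have htb0 : 0 ≤ tb := by
    rw [htb]; apply div_nonneg <;> linarith
  have := hall tb ⟨htb0, le_of_lt (lt_of_le_of_lt h1 ht')⟩
  linarith
end
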